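/- arXiv:2408.09313 — 2 statements merged into one kernel-verified Lean document; each statement's English description precedes it below -/
import Mathlib

section
/- Let λ be a weak composition and κ a weak komposition. Then κ is the kontent of a set-valued weak composition tableau of shape λ if and only if κ is a glide of λ. -/
/-!
STATEMENT 2: Let λ be a weak composition and κ a weak komposition. Then κ is the kontent of
a set-valued weak composition tableau of shape λ if and only if κ is a glide of λ.

Conventions: positions of (weak) compositions/kompositions are 0-indexed, and the entry
recorded at position `i` counts the tableau entry `i + 1`.
-/

open scoped Classical

/-- The boxes of the Young diagram of a weak composition `lam`. -/
def boxes (lam : List ℕ) : Finset (ℕ × ℕ) :=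
  (Finset.range lam.length ×ˢ Finset.range (lam.foldr max 0)).filter
    (fun p => p.2 < lam.getD p.1 0)

/-- Lexicographic order on boxes. -/
def boxLe (p q : ℕ × ℕ) : Prop := p.1 < q.1 ∨ (p.1 = q.1 ∧ p.2 ≤ q.2)

/-- `T` is a weak composition tableau of shape `lam`. -/
structure IsWeakCompTableau (lam : List ℕ) (T : ℕ × ℕ → ℕ) : Prop where
  pos : ∀ p ∈ boxes lam, 1 ≤ T p
  mono : ∀ p ∈ boxes lam, ∀ q ∈ boxes lam, boxLe p q → T p ≤ T q
  rows : ∀ p ∈ boxes lam, ∀ q ∈ boxes lam, p.1 < q.1 → T p < T q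
  rowBound : ∀ p ∈ boxes lam, T p ≤ p.1 + 1

/-- `T` is a set-valued weak composition tableau of shape `lam`: every box is assigned a
nonempty finite set, and every choice of one element from each box yields a weak composition
tableau of shape `lam`. -/
def IsSetValuedWCT (lam : List ℕ) (T : ℕ × ℕ → Finset ℕ) : Prop :=
  (∀ p ∈ boxes lam, (T p).Nonempty) ∧
  ∀ f : ℕ × ℕ → ℕ, (∀ p ∈ boxes lam, f p ∈ T p) → IsWeakCompTableau lam f

/-- A weak komposition: a weak composition together with a set of marked positions.
(The requirement that marks occur only at nonzero positions is `WKomp.Valid`.) -/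
structure WKomp where
  toList : List ℕ
  marks : Finset ℕ

/-- The marked positions of a weak komposition must be positions with nonzero entry. -/
def WKomp.Valid (k : WKomp) : Prop := ∀ i ∈ k.marks, k.toList.getD i 0 ≠ 0

/-- `k` is the kontent of the set-valued tableau `T` of shape `lam`: its underlying list is
the content of `T` (position `i` counts boxes containing `i+1`), and position `i` is marked
exactly when some box contains `i+1` together with a smaller element. -/
def HasKontent (lam : List ℕ) (T : ℕ × ℕ → Finset ℕ) (k : WKomp) : Prop :=
  (∀ i : ℕ, ((boxes lam).filter (fun p => i + 1 ∈ T p)).card = k.toList.getD i 0) ∧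
  (∀ i : ℕ, i ∈ k.marks ↔ ∃ p ∈ boxes lam, i + 1 ∈ T p ∧ ∃ v ∈ T p, v < i + 1)

/-- The (0-indexed) positions of the nonzero entries of `lam`, in increasing order. -/
def nzPositions (lam : List ℕ) : List ℕ :=
  (List.range lam.length).filter (fun i => lam.getD i 0 ≠ 0)

/-- `k` is a glide of `lam`.  Here `I : ℕ → ℕ` plays the role of the indices
`0 = i_0 < i_1 < ⋯ < i_l` of the definition (as counts of 0-indexed positions): the `j`-th
block consists of the 0-indexed positions in `[I j, I (j+1))`. -/
def IsGlide (k : WKomp) (lam : List ℕ) : Prop :=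
  ∃ I : ℕ → ℕ, I 0 = 0 ∧
    (∀ j < (nzPositions lam).length, I j < I (j + 1)) ∧
    (∀ t : ℕ, I (nzPositions lam).length ≤ t → k.toList.getD t 0 = 0) ∧
    ∀ j < (nzPositions lam).length,
      ((∑ t ∈ Finset.Ico (I j) (I (j + 1)), k.toList.getD t 0)
          = lam.getD ((nzPositions lam).getD j 0) 0
              + (k.marks ∩ Finset.Ico (I j) (I (j + 1))).card) ∧
      (I (j + 1) ≤ (nzPositions lam).getD j 0 + 1) ∧
      (∀ t ∈ Finset.Ico (I j) (I (j + 1)), k.toList.getD t 0 ≠ 0 →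
        (∀ s ∈ Finset.Ico (I j) t, k.toList.getD s 0 = 0) → t ∉ k.marks)

/-!
In a set-valued tableau every entry of the `j`-th nonzero row exceeds every entry of the earlier
rows, so the largest entries `i_1 < ⋯ < i_l` of the first nonzero rows cut the kontent into
blocks, the `j`-th block recording the `j`-th nonzero row. Along a row the sets increase weakly
(the maximum of a box is at most the minimum of the next one), so non-minimal elements of
different boxes are distinct: the block sum is the row length plus the number of marks in the
block, and a block cannot start with a marked entry.

Conversely a glide is filled into the rows block by block: the entry `t + 1` occupies `κ_t`
consecutive boxes, starting in the last box used so far when `t` is marked and in a fresh box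
otherwise; such a box exists because the first nonzero entry of each block is unmarked.
-/

namespace Glide

lemma exists_le_lt_succ (f : ℕ → ℕ) {a b c : ℕ} (hab : a ≤ b) (ha : f a ≤ c) (hb : c < f b) :
    ∃ t, a ≤ t ∧ t < b ∧ f t ≤ c ∧ c < f (t + 1) := by
  induction b, hab using Nat.le_induction with
  | base => omega
  | succ b hab ih =>
    by_cases h : c < f b
    · obtain ⟨t, h1, h2, h3⟩ := ih h
      exact ⟨t, h1, by omega, h3⟩
    · exact ⟨b, hab, by omega, by omega, hb⟩

section NonMin

variable {α : Type*} [LinearOrder α]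

def nonMin (s : Finset α) : Finset α := s.filter fun v => ∃ w ∈ s, w < v

lemma nonMin_eq_erase_min' {s : Finset α} (hs : s.Nonempty) : nonMin s = s.erase (s.min' hs) := by
  ext v
  simp only [nonMin, Finset.mem_filter, Finset.mem_erase]
  constructor
  · rintro ⟨hv, w, hw, hwv⟩
    exact ⟨(hwv.trans_le' (s.min'_le w hw)).ne', hv⟩
  · rintro ⟨hne, hv⟩
    exact ⟨hv, s.min' hs, s.min'_mem hs, lt_of_le_of_ne (s.min'_le v hv) (Ne.symm hne)⟩

lemma card_nonMin {s : Finset α} (hs : s.Nonempty) : (nonMin s).card = s.card - 1 := by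
  rw [nonMin_eq_erase_min' hs, Finset.card_erase_of_mem (s.min'_mem hs)]

end NonMin

section Rows

variable {lam : List ℕ}

lemma getD_le_foldr_max (lam : List ℕ) (r : ℕ) : lam.getD r 0 ≤ lam.foldr max 0 := by
  induction lam generalizing r with
  | nil => simp
  | cons a l ih =>
    cases r with
    | zero => simp
    | succ n => exact (ih n).trans (le_max_right _ _)

lemma mem_boxes {p : ℕ × ℕ} : p ∈ boxes lam ↔ p.1 < lam.length ∧ p.2 < lam.getD p.1 0 := by
  simp only [boxes, Finset.mem_filter, Finset.mem_product, Finset.mem_range]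
  exact ⟨fun h => ⟨h.1.1, h.2⟩,
    fun h => ⟨⟨h.1, h.2.trans_le (getD_le_foldr_max lam p.1)⟩, h.2⟩⟩

lemma mem_nzPositions {r : ℕ} : r ∈ nzPositions lam ↔ r < lam.length ∧ lam.getD r 0 ≠ 0 := by
  simp [nzPositions]

def numNz (lam : List ℕ) : ℕ := (nzPositions lam).length

def nzRow (lam : List ℕ) (j : ℕ) : ℕ := (nzPositions lam).getD j 0

lemma nzRow_mem {j : ℕ} (hj : j < numNz lam) :
    nzRow lam j < lam.length ∧ lam.getD (nzRow lam j) 0 ≠ 0 := by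
  rw [nzRow, List.getD_eq_getElem _ _ hj, ← mem_nzPositions]
  exact List.getElem_mem hj

lemma nzRow_lt_nzRow {i j : ℕ} (hij : i < j) (hj : j < numNz lam) :
    nzRow lam i < nzRow lam j := by
  have hs : (nzPositions lam).Pairwise (· < ·) :=
    List.Pairwise.filter _ (List.pairwise_lt_range (n := lam.length))
  have hi : i < numNz lam := hij.trans hj
  rw [nzRow, nzRow, List.getD_eq_getElem _ _ hi, List.getD_eq_getElem _ _ hj]
  exact List.pairwise_iff_getElem.mp hs i j hi hj hij

lemma nzRow_le_nzRow {i j : ℕ} (hij : i ≤ j) (hj : j < numNz lam) :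
    nzRow lam i ≤ nzRow lam j := by
  rcases hij.eq_or_lt with rfl | h
  · exact le_rfl
  · exact (nzRow_lt_nzRow h hj).le

lemma nzRow_inj {i j : ℕ} (hi : i < numNz lam) (hj : j < numNz lam)
    (h : nzRow lam i = nzRow lam j) : i = j := by
  by_contra hne
  rcases Nat.lt_or_gt_of_ne hne with hlt | hlt
  · exact (nzRow_lt_nzRow hlt hj).ne h
  · exact (nzRow_lt_nzRow hlt hi).ne' h

lemma exists_nzRow_eq_of_mem_boxes {p : ℕ × ℕ} (hp : p ∈ boxes lam) :
    ∃ j < numNz lam, nzRow lam j = p.1 := by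
  have hmem : p.1 ∈ nzPositions lam := by
    obtain ⟨h1, h2⟩ := mem_boxes.mp hp
    exact mem_nzPositions.mpr ⟨h1, by omega⟩
  obtain ⟨j, hj, hjp⟩ := List.getElem_of_mem hmem
  exact ⟨j, hj, by rw [nzRow, List.getD_eq_getElem _ _ hj, hjp]⟩

def rowBoxes (lam : List ℕ) (j : ℕ) : Finset (ℕ × ℕ) :=
  (boxes lam).filter (fun p => p.1 = nzRow lam j)

lemma rowBoxes_subset (j : ℕ) : rowBoxes lam j ⊆ boxes lam := Finset.filter_subset _ _

lemma mem_rowBoxes_of_mem_boxes {p : ℕ × ℕ} {j : ℕ} (hp : p ∈ boxes lam)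
    (hj : nzRow lam j = p.1) : p ∈ rowBoxes lam j :=
  Finset.mem_filter.mpr ⟨hp, hj.symm⟩

lemma rowBoxes_eq {j : ℕ} (hj : j < numNz lam) :
    rowBoxes lam j = {nzRow lam j} ×ˢ Finset.range (lam.getD (nzRow lam j) 0) := by
  ext p
  simp only [rowBoxes, Finset.mem_filter, mem_boxes, Finset.mem_product, Finset.mem_singleton,
    Finset.mem_range]
  constructor
  · rintro ⟨⟨-, h⟩, hr⟩
    exact ⟨hr, hr ▸ h⟩
  · rintro ⟨h, h'⟩
    exact ⟨⟨h ▸ (nzRow_mem hj).1, h ▸ h'⟩, h⟩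

end Rows

section Entries

variable {lam : List ℕ} {T : ℕ × ℕ → Finset ℕ}

lemma exists_tableau_of_mem (hT : IsSetValuedWCT lam T) {p q : ℕ × ℕ} {v w : ℕ}
    (hv : v ∈ T p) (hw : w ∈ T q) :
    ∃ f, IsWeakCompTableau lam f ∧ (p ≠ q → f p = v) ∧ f q = w := by
  let g : ℕ × ℕ → ℕ := fun x => if h : (T x).Nonempty then h.choose else 0
  let f := Function.update (Function.update g p v) q w
  have hf : ∀ x ∈ boxes lam, f x ∈ T x := by
    intro x hx
    rcases eq_or_ne x q with rfl | hxq
    · simpa [f] using hw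
    rcases eq_or_ne x p with rfl | hxp
    · simpa [f, hxq] using hv
    simpa [f, g, hxq, hxp, dif_pos (hT.1 x hx)] using (hT.1 x hx).choose_spec
  exact ⟨f, hT.2 f hf, fun hpq => by simp [f, Function.update_of_ne hpq], by simp [f]⟩

lemma one_le_of_mem (hT : IsSetValuedWCT lam T) {p : ℕ × ℕ} (hp : p ∈ boxes lam)
    {v : ℕ} (hv : v ∈ T p) : 1 ≤ v := by
  obtain ⟨f, hf, -, rfl⟩ := exists_tableau_of_mem hT hv hv
  exact hf.pos p hp

lemma le_row_add_one_of_mem (hT : IsSetValuedWCT lam T) {p : ℕ × ℕ}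
    (hp : p ∈ boxes lam) {v : ℕ} (hv : v ∈ T p) : v ≤ p.1 + 1 := by
  obtain ⟨f, hf, -, rfl⟩ := exists_tableau_of_mem hT hv hv
  exact hf.rowBound p hp

lemma lt_of_row_lt (hT : IsSetValuedWCT lam T) {p q : ℕ × ℕ}
    (hp : p ∈ boxes lam) (hq : q ∈ boxes lam) (h : p.1 < q.1) {v w : ℕ}
    (hv : v ∈ T p) (hw : w ∈ T q) : v < w := by
  obtain ⟨f, hf, hfp, rfl⟩ := exists_tableau_of_mem hT hv hw
  rw [← hfp (by rintro rfl; omega)]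
  exact hf.rows p hp q hq h

lemma le_of_col_lt (hT : IsSetValuedWCT lam T) {p q : ℕ × ℕ}
    (hp : p ∈ boxes lam) (hq : q ∈ boxes lam) (h1 : p.1 = q.1) (h2 : p.2 < q.2) {v w : ℕ}
    (hv : v ∈ T p) (hw : w ∈ T q) : v ≤ w := by
  obtain ⟨f, hf, hfp, rfl⟩ := exists_tableau_of_mem hT hv hw
  rw [← hfp (by rintro rfl; omega)]
  exact hf.mono p hp q hq (Or.inr ⟨h1, h2.le⟩)

end Entries

section Forward

variable {lam : List ℕ} {T : ℕ × ℕ → Finset ℕ} {k : WKomp}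

/-- The indices `i_j` of the glide built from a tableau. -/
def blockEnd (T : ℕ × ℕ → Finset ℕ) (lam : List ℕ) (j : ℕ) : ℕ :=
  (Finset.range (min j (numNz lam))).sup fun i => (rowBoxes lam i).sup fun p => (T p).sup id

lemma blockEnd_zero : blockEnd T lam 0 = 0 := by simp [blockEnd]

lemma blockEnd_mono : Monotone (blockEnd T lam) := fun _ _ h =>
  Finset.sup_mono (Finset.range_subset_range.mpr (min_le_min_right _ h))

lemma le_blockEnd {i j : ℕ} (hij : i < j) (hi : i < numNz lam) {p : ℕ × ℕ}
    (hp : p ∈ rowBoxes lam i) {v : ℕ} (hv : v ∈ T p) : v ≤ blockEnd T lam j :=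
  calc v ≤ (T p).sup id := Finset.le_sup (f := id) hv
    _ ≤ (rowBoxes lam i).sup fun p => (T p).sup id := Finset.le_sup (f := fun p => (T p).sup id) hp
    _ ≤ blockEnd T lam j :=
      Finset.le_sup (f := fun i => (rowBoxes lam i).sup fun p => (T p).sup id)
        (Finset.mem_range.mpr (lt_min hij hi))

lemma blockEnd_lt_of_mem (hT : IsSetValuedWCT lam T) {j : ℕ} (hj : j < numNz lam)
    {p : ℕ × ℕ} (hp : p ∈ rowBoxes lam j) {v : ℕ} (hv : v ∈ T p) : blockEnd T lam j < v := by
  have hp' := rowBoxes_subset j hp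
  have hv1 := one_le_of_mem hT hp' hv
  simp only [blockEnd, Finset.sup_lt_iff (show (⊥ : ℕ) < v by simp; omega), Finset.mem_range]
  intro i hi q hq w hw
  have hrow : q.1 < p.1 := by
    rw [(Finset.mem_filter.mp hq).2, (Finset.mem_filter.mp hp).2]
    exact nzRow_lt_nzRow (by omega) hj
  exact lt_of_row_lt hT (rowBoxes_subset i hq) hp' hrow hw hv

abbrev block (T : ℕ × ℕ → Finset ℕ) (lam : List ℕ) (j : ℕ) : Finset ℕ :=
  Finset.Ico (blockEnd T lam j) (blockEnd T lam (j + 1))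

lemma mem_Ioc_blockEnd (hT : IsSetValuedWCT lam T) {j : ℕ} (hj : j < numNz lam)
    {p : ℕ × ℕ} (hp : p ∈ rowBoxes lam j) {v : ℕ} (hv : v ∈ T p) :
    v ∈ Finset.Ioc (blockEnd T lam j) (blockEnd T lam (j + 1)) :=
  Finset.mem_Ioc.mpr ⟨blockEnd_lt_of_mem hT hj hp hv, le_blockEnd (Nat.lt_succ_self j) hj hp hv⟩

lemma mem_rowBoxes_of_mem_block (hT : IsSetValuedWCT lam T) {j t : ℕ} (ht : t ∈ block T lam j)
    {p : ℕ × ℕ} (hp : p ∈ boxes lam) (hv : t + 1 ∈ T p) : p ∈ rowBoxes lam j := by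
  obtain ⟨i, hi, hip⟩ := exists_nzRow_eq_of_mem_boxes hp
  have hpi := mem_rowBoxes_of_mem_boxes hp hip
  have hb := Finset.mem_Ioc.mp (mem_Ioc_blockEnd hT hi hpi hv)
  have ht' := Finset.mem_Ico.mp ht
  rcases lt_trichotomy i j with h | rfl | h
  · have := blockEnd_mono (T := T) (lam := lam) (show i + 1 ≤ j by omega)
    omega
  · exact hpi
  · have := blockEnd_mono (T := T) (lam := lam) (show j + 1 ≤ i by omega)
    omega

lemma content_eq_card_rowBoxes (hT : IsSetValuedWCT lam T) (hK : HasKontent lam T k)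
    {j t : ℕ} (ht : t ∈ block T lam j) :
    k.toList.getD t 0 = ((rowBoxes lam j).filter fun p => t + 1 ∈ T p).card := by
  rw [← hK.1 t]
  congr 1
  ext p
  simp only [Finset.mem_filter]
  exact ⟨fun ⟨hp, hv⟩ => ⟨mem_rowBoxes_of_mem_block hT ht hp hv, hv⟩,
    fun ⟨hp, hv⟩ => ⟨rowBoxes_subset j hp, hv⟩⟩

lemma map_filter_block (hT : IsSetValuedWCT lam T) {j : ℕ} (hj : j < numNz lam)
    {p : ℕ × ℕ} (hp : p ∈ rowBoxes lam j) :
    ((block T lam j).filter fun t => t + 1 ∈ T p).map (addRightEmbedding 1) = T p := by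
  ext v
  simp only [Finset.mem_map, Finset.mem_filter, Finset.mem_Ico, addRightEmbedding_apply]
  constructor
  · rintro ⟨t, ⟨-, ht⟩, rfl⟩
    exact ht
  · intro hv
    have := one_le_of_mem hT (rowBoxes_subset j hp) hv
    have := Finset.mem_Ioc.mp (mem_Ioc_blockEnd hT hj hp hv)
    exact ⟨v - 1, ⟨by omega, by rwa [Nat.sub_add_cancel (by omega)]⟩, by omega⟩

lemma sum_content_block (hT : IsSetValuedWCT lam T) (hK : HasKontent lam T k) {j : ℕ}
    (hj : j < numNz lam) :
    ∑ t ∈ block T lam j, k.toList.getD t 0 = ∑ p ∈ rowBoxes lam j, (T p).card := by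
  rw [Finset.sum_congr rfl fun t ht => content_eq_card_rowBoxes hT hK ht]
  simp only [Finset.card_filter]
  rw [Finset.sum_comm]
  refine Finset.sum_congr rfl fun p hp => ?_
  have hcard := congrArg Finset.card (map_filter_block hT hj hp)
  rw [Finset.card_map] at hcard
  rw [← Finset.card_filter, hcard]

lemma pairwiseDisjoint_nonMin (hT : IsSetValuedWCT lam T) (j : ℕ) :
    (rowBoxes lam j : Set (ℕ × ℕ)).PairwiseDisjoint fun p => nonMin (T p) := by
  intro p hp q hq hpq
  have hrow : p.1 = q.1 := (Finset.mem_filter.mp hp).2.trans (Finset.mem_filter.mp hq).2.symm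
  have hcol : p.2 ≠ q.2 := fun h => hpq (Prod.ext hrow h)
  simp only [Function.onFun, Finset.disjoint_left, nonMin, Finset.mem_filter]
  rintro v ⟨hvp, wp, hwp, hwpv⟩ ⟨hvq, wq, hwq, hwqv⟩
  rcases Nat.lt_or_gt_of_ne hcol with h | h
  · have := le_of_col_lt hT (rowBoxes_subset j hp) (rowBoxes_subset j hq) hrow h hvp hwq
    omega
  · have := le_of_col_lt hT (rowBoxes_subset j hq) (rowBoxes_subset j hp) hrow.symm h hvq hwp
    omega

lemma biUnion_nonMin_eq (hT : IsSetValuedWCT lam T) (hK : HasKontent lam T k) {j : ℕ}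
    (hj : j < numNz lam) :
    (rowBoxes lam j).biUnion (fun p => nonMin (T p))
      = (k.marks ∩ block T lam j).map (addRightEmbedding 1) := by
  ext v
  simp only [Finset.mem_biUnion, Finset.mem_map, Finset.mem_inter, addRightEmbedding_apply,
    nonMin, Finset.mem_filter]
  constructor
  · rintro ⟨p, hp, hv, w, hw, hwv⟩
    have := one_le_of_mem hT (rowBoxes_subset j hp) hv
    have := Finset.mem_Ioc.mp (mem_Ioc_blockEnd hT hj hp hv)
    obtain ⟨t, rfl⟩ : ∃ t, v = t + 1 := ⟨v - 1, by omega⟩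
    exact ⟨t, ⟨(hK.2 t).mpr ⟨p, rowBoxes_subset j hp, hv, w, hw, hwv⟩,
      Finset.mem_Ico.mpr ⟨by omega, by omega⟩⟩, rfl⟩
  · rintro ⟨t, ⟨htm, ht⟩, rfl⟩
    obtain ⟨p, hp, hv, w, hw, hwv⟩ := (hK.2 t).mp htm
    exact ⟨p, mem_rowBoxes_of_mem_block hT ht hp hv, hv, w, hw, hwv⟩

lemma sum_card_sub_one_rowBoxes (hT : IsSetValuedWCT lam T) (hK : HasKontent lam T k) {j : ℕ}
    (hj : j < numNz lam) :
    ∑ p ∈ rowBoxes lam j, ((T p).card - 1) = (k.marks ∩ block T lam j).card :=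
  calc ∑ p ∈ rowBoxes lam j, ((T p).card - 1)
      = ∑ p ∈ rowBoxes lam j, (nonMin (T p)).card :=
        Finset.sum_congr rfl fun p hp => (card_nonMin (hT.1 p (rowBoxes_subset j hp))).symm
    _ = ((rowBoxes lam j).biUnion fun p => nonMin (T p)).card :=
        (Finset.card_biUnion (pairwiseDisjoint_nonMin hT j)).symm
    _ = (k.marks ∩ block T lam j).card := by
        rw [biUnion_nonMin_eq hT hK hj, Finset.card_map]

lemma sum_content_block_eq (hT : IsSetValuedWCT lam T) (hK : HasKontent lam T k) {j : ℕ}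
    (hj : j < numNz lam) :
    ∑ t ∈ block T lam j, k.toList.getD t 0
      = lam.getD (nzRow lam j) 0 + (k.marks ∩ block T lam j).card := by
  have hsplit : ∀ p ∈ rowBoxes lam j, (T p).card = 1 + ((T p).card - 1) := fun p hp => by
    have := (hT.1 p (rowBoxes_subset j hp)).card_pos
    omega
  rw [sum_content_block hT hK hj, Finset.sum_congr rfl hsplit, Finset.sum_add_distrib,
    sum_card_sub_one_rowBoxes hT hK hj, rowBoxes_eq hj]
  simp

lemma blockEnd_lt_blockEnd_succ (hT : IsSetValuedWCT lam T) {j : ℕ} (hj : j < numNz lam) :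
    blockEnd T lam j < blockEnd T lam (j + 1) := by
  have hp : (nzRow lam j, 0) ∈ rowBoxes lam j := by
    rw [rowBoxes_eq hj]
    simpa using Nat.pos_of_ne_zero (nzRow_mem hj).2
  obtain ⟨v, hv⟩ := hT.1 _ (rowBoxes_subset j hp)
  have := Finset.mem_Ioc.mp (mem_Ioc_blockEnd hT hj hp hv)
  omega

lemma blockEnd_succ_le (hT : IsSetValuedWCT lam T) {j : ℕ} (hj : j < numNz lam) :
    blockEnd T lam (j + 1) ≤ nzRow lam j + 1 := by
  refine Finset.sup_le fun i hi => Finset.sup_le fun p hp => Finset.sup_le fun v hv => ?_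
  have hi : i ≤ j := by simp only [Finset.mem_range] at hi; omega
  have := le_row_add_one_of_mem hT (rowBoxes_subset i hp) hv
  have := nzRow_le_nzRow hi hj
  rw [(Finset.mem_filter.mp hp).2] at *
  simp only [id]
  omega

lemma content_eq_zero_of_blockEnd_le (hT : IsSetValuedWCT lam T) (hK : HasKontent lam T k)
    {t : ℕ} (ht : blockEnd T lam (numNz lam) ≤ t) : k.toList.getD t 0 = 0 := by
  rw [← hK.1 t, Finset.card_eq_zero, Finset.filter_eq_empty_iff]
  intro p hp hv
  obtain ⟨i, hi, hip⟩ := exists_nzRow_eq_of_mem_boxes hp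
  have := Finset.mem_Ioc.mp (mem_Ioc_blockEnd hT hi (mem_rowBoxes_of_mem_boxes hp hip) hv)
  have := blockEnd_mono (T := T) (lam := lam) (show i + 1 ≤ numNz lam from hi)
  omega

lemma not_mem_marks_of_zero_before (hT : IsSetValuedWCT lam T) (hK : HasKontent lam T k)
    {j t : ℕ} (hj : j < numNz lam) (ht : t ∈ block T lam j)
    (hzero : ∀ s ∈ Finset.Ico (blockEnd T lam j) t, k.toList.getD s 0 = 0) : t ∉ k.marks := by
  intro htm
  obtain ⟨p, hp, hv, w, hw, hwt⟩ := (hK.2 t).mp htm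
  have hpj := mem_rowBoxes_of_mem_block hT ht hp hv
  obtain ⟨s, rfl⟩ : ∃ s, w = s + 1 := ⟨w - 1, by have := one_le_of_mem hT hp hw; omega⟩
  have := blockEnd_lt_of_mem hT hj hpj hw
  have hs := hzero s (Finset.mem_Ico.mpr ⟨by omega, by omega⟩)
  rw [← hK.1 s, Finset.card_eq_zero, Finset.filter_eq_empty_iff] at hs
  exact hs hp hw

lemma glide_of_tableau (hT : IsSetValuedWCT lam T) (hK : HasKontent lam T k) : IsGlide k lam :=
  ⟨blockEnd T lam, blockEnd_zero, fun _ hj => blockEnd_lt_blockEnd_succ hT hj,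
    fun _ ht => content_eq_zero_of_blockEnd_le hT hK ht, fun _ hj =>
      ⟨sum_content_block_eq hT hK hj, blockEnd_succ_le hT hj,
        fun _ ht _ hzero => not_mem_marks_of_zero_before hT hK hj ht hzero⟩⟩

end Forward

def entry (k : WKomp) (t : ℕ) : ℕ := k.toList.getD t 0

def mark (k : WKomp) (t : ℕ) : ℕ := if t ∈ k.marks then 1 else 0

lemma mark_le_one (k : WKomp) (t : ℕ) : mark k t ≤ 1 := by
  unfold mark; split_ifs <;> omega

lemma mark_eq_zero {k : WKomp} {t : ℕ} (ht : t ∉ k.marks) : mark k t = 0 := if_neg ht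

lemma mark_eq_one {k : WKomp} {t : ℕ} (ht : t ∈ k.marks) : mark k t = 1 := if_pos ht

lemma mark_le_entry {k : WKomp} (hk : k.Valid) (t : ℕ) : mark k t ≤ entry k t := by
  unfold mark; split_ifs with h
  · exact Nat.one_le_iff_ne_zero.mpr (hk t h)
  · exact Nat.zero_le _

lemma sum_mark (k : WKomp) (s : Finset ℕ) : ∑ t ∈ s, mark k t = (k.marks ∩ s).card := by
  rw [Finset.inter_comm, ← Finset.filter_mem_eq_inter, Finset.card_filter]
  rfl

/-- The witness `I` of `IsGlide k lam`, bundled with `k.Valid`. -/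
structure GlideData (k : WKomp) (lam : List ℕ) where
  I : ℕ → ℕ
  valid : k.Valid
  I_zero : I 0 = 0
  I_lt_succ : ∀ j < numNz lam, I j < I (j + 1)
  entry_eq_zero : ∀ t, I (numNz lam) ≤ t → entry k t = 0
  sum_entry : ∀ j < numNz lam, ∑ t ∈ Finset.Ico (I j) (I (j + 1)), entry k t
      = lam.getD (nzRow lam j) 0 + (k.marks ∩ Finset.Ico (I j) (I (j + 1))).card
  I_succ_le : ∀ j < numNz lam, I (j + 1) ≤ nzRow lam j + 1
  not_mem_marks : ∀ j < numNz lam, ∀ t ∈ Finset.Ico (I j) (I (j + 1)), entry k t ≠ 0 →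
      (∀ s ∈ Finset.Ico (I j) t, entry k s = 0) → t ∉ k.marks

namespace GlideData

variable {lam : List ℕ} {k : WKomp} (G : GlideData k lam)

abbrev block (j : ℕ) : Finset ℕ := Finset.Ico (G.I j) (G.I (j + 1))

lemma I_le_I {i j : ℕ} (hij : i ≤ j) (hj : j ≤ numNz lam) : G.I i ≤ G.I j := by
  induction j, hij using Nat.le_induction with
  | base => exact le_rfl
  | succ j hij ih => exact (ih (by omega)).trans (G.I_lt_succ j (by omega)).le

lemma block_unique {i j t : ℕ} (hi : i < numNz lam) (hj : j < numNz lam)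
    (hti : t ∈ G.block i) (htj : t ∈ G.block j) :
    i = j := by
  rw [Finset.mem_Ico] at hti htj
  by_contra hne
  rcases Nat.lt_or_gt_of_ne hne with h | h
  · have := G.I_le_I (show i + 1 ≤ j by omega) hj.le
    omega
  · have := G.I_le_I (show j + 1 ≤ i by omega) hi.le
    omega

lemma exists_block {t : ℕ} (ht : t < G.I (numNz lam)) :
    ∃ j < numNz lam, t ∈ G.block j := by
  obtain ⟨j, -, hj, h1, h2⟩ :=
    exists_le_lt_succ G.I (Nat.zero_le (numNz lam)) (by rw [G.I_zero]; omega) ht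
  exact ⟨j, hj, Finset.mem_Ico.mpr ⟨h1, h2⟩⟩

/-- The number of boxes of the `j`-th nonzero row filled before the entry `t + 1` is placed:
each entry `s + 1` opens `κ_s` new boxes, or `κ_s - 1` if `s` is marked, its first copy then
sharing the last box already filled. -/
def fill (j t : ℕ) : ℕ := ∑ s ∈ Finset.Ico (G.I j) t, (entry k s - mark k s)

lemma fill_start (j : ℕ) : G.fill j (G.I j) = 0 := by simp [fill]

lemma fill_succ {j t : ℕ} (h : G.I j ≤ t) :
    G.fill j (t + 1) = G.fill j t + (entry k t - mark k t) := by
  rw [fill, fill, Finset.sum_Ico_succ_top h]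

lemma fill_mono (j : ℕ) : Monotone (G.fill j) := fun _ _ h =>
  Finset.sum_le_sum_of_subset (Finset.Ico_subset_Ico le_rfl h)

lemma fill_end {j : ℕ} (hj : j < numNz lam) :
    G.fill j (G.I (j + 1)) = lam.getD (nzRow lam j) 0 := by
  have hsum : G.fill j (G.I (j + 1)) + ∑ s ∈ G.block j, mark k s
      = ∑ s ∈ G.block j, entry k s := by
    rw [fill, ← Finset.sum_add_distrib]
    exact Finset.sum_congr rfl fun s _ => Nat.sub_add_cancel (mark_le_entry G.valid s)
  rw [sum_mark, G.sum_entry j hj] at hsum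
  exact Nat.add_right_cancel hsum

lemma entry_eq_zero_of_fill_eq_zero {j t : ℕ} (hj : j < numNz lam) (hIt : G.I j ≤ t)
    (ht : t ≤ G.I (j + 1)) (hfill : G.fill j t = 0) :
    ∀ s ∈ Finset.Ico (G.I j) t, entry k s = 0 := by
  induction t, hIt using Nat.le_induction with
  | base => simp
  | succ t hIt ih =>
    rw [G.fill_succ hIt] at hfill
    have hprev := ih (by omega) (by omega)
    intro s hs
    rcases Nat.lt_succ_iff_lt_or_eq.mp (Finset.mem_Ico.mp hs).2 with hst | rfl
    · exact hprev s (Finset.mem_Ico.mpr ⟨(Finset.mem_Ico.mp hs).1, hst⟩)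
    · by_contra h0
      have := G.not_mem_marks j hj s (Finset.mem_Ico.mpr ⟨hIt, by omega⟩) h0 hprev
      rw [mark_eq_zero this] at hfill
      omega

lemma one_le_fill_of_mem_marks {j t : ℕ} (hj : j < numNz lam)
    (ht : t ∈ G.block j) (htm : t ∈ k.marks) : 1 ≤ G.fill j t := by
  obtain ⟨h1, h2⟩ := Finset.mem_Ico.mp ht
  by_contra hfill
  have hzero := G.entry_eq_zero_of_fill_eq_zero hj h1 h2.le (by omega)
  exact G.not_mem_marks j hj t ht (G.valid t htm) hzero htm

def cols (j t : ℕ) : Finset ℕ :=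
  Finset.Ico (G.fill j t - mark k t) (G.fill j t + entry k t - mark k t)

lemma mark_le_fill {j t : ℕ} (hj : j < numNz lam) (ht : t ∈ G.block j) :
    mark k t ≤ G.fill j t := by
  by_cases htm : t ∈ k.marks
  · rw [mark_eq_one htm]
    exact G.one_le_fill_of_mem_marks hj ht htm
  · rw [mark_eq_zero htm]
    exact Nat.zero_le _

lemma card_cols {j t : ℕ} (hj : j < numNz lam) (ht : t ∈ G.block j) :
    (G.cols j t).card = entry k t := by
  have := G.mark_le_fill hj ht
  rw [cols, Nat.card_Ico]
  omega

lemma cols_subset_range {j t : ℕ} (hj : j < numNz lam)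
    (ht : t ∈ G.block j) :
    G.cols j t ⊆ Finset.range (lam.getD (nzRow lam j) 0) := by
  obtain ⟨h1, h2⟩ := Finset.mem_Ico.mp ht
  have hsucc := G.fill_succ h1
  have hmono := G.fill_mono j (show t + 1 ≤ G.I (j + 1) by omega)
  have := mark_le_entry G.valid t
  rw [G.fill_end hj] at hmono
  intro c hc
  simp only [cols, Finset.mem_Ico, Finset.mem_range] at hc ⊢
  omega

lemma lt_add_mark_of_mem_cols {j t u c d : ℕ} (hu : G.I j ≤ u) (hut : u < t)
    (hd : d ∈ G.cols j u) (hc : c ∈ G.cols j t) : d < c + mark k t := by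
  have hsucc := G.fill_succ hu
  have hmono := G.fill_mono j (show u + 1 ≤ t from hut)
  have := mark_le_entry G.valid u
  simp only [cols, Finset.mem_Ico] at hc hd
  omega

def tableau (p : ℕ × ℕ) : Finset ℕ :=
  ((Finset.range (G.I (numNz lam))).filter fun t => ∃ j < numNz lam, nzRow lam j = p.1 ∧
    t ∈ G.block j ∧ p.2 ∈ G.cols j t).map (addRightEmbedding 1)

lemma mem_tableau {p : ℕ × ℕ} {t : ℕ} :
    t + 1 ∈ G.tableau p ↔ ∃ j < numNz lam, nzRow lam j = p.1 ∧
      t ∈ G.block j ∧ p.2 ∈ G.cols j t := by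
  simp only [tableau, Finset.mem_map, Finset.mem_filter, Finset.mem_range,
    addRightEmbedding_apply, add_left_inj, exists_eq_right]
  refine ⟨fun h => h.2, fun ⟨j, hj, hr, ht, hc⟩ => ⟨?_, j, hj, hr, ht, hc⟩⟩
  exact (Finset.mem_Ico.mp ht).2.trans_le (G.I_le_I (by omega) le_rfl)

lemma exists_of_mem_tableau {p : ℕ × ℕ} {v : ℕ} (hv : v ∈ G.tableau p) :
    ∃ t, v = t + 1 ∧ ∃ j < numNz lam, nzRow lam j = p.1 ∧
      t ∈ G.block j ∧ p.2 ∈ G.cols j t := by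
  obtain ⟨t, -, rfl⟩ := Finset.mem_map.mp hv
  exact ⟨t, rfl, G.mem_tableau.mp hv⟩

lemma tableau_nonempty {p : ℕ × ℕ} (hp : p ∈ boxes lam) : (G.tableau p).Nonempty := by
  obtain ⟨j, hj, hjp⟩ := exists_nzRow_eq_of_mem_boxes hp
  have hc : p.2 < G.fill j (G.I (j + 1)) := by
    rw [G.fill_end hj, hjp]
    exact (mem_boxes.mp hp).2
  obtain ⟨t, h1, h2, h3, h4⟩ :=
    exists_le_lt_succ (G.fill j) (G.I_lt_succ j hj).le (by rw [G.fill_start]; omega) hc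
  rw [G.fill_succ h1] at h4
  have := mark_le_entry G.valid t
  refine ⟨t + 1, G.mem_tableau.mpr ⟨j, hj, hjp, Finset.mem_Ico.mpr ⟨h1, h2⟩, ?_⟩⟩
  simp only [cols, Finset.mem_Ico]
  omega

lemma lt_of_mem_tableau_of_row_lt {p q : ℕ × ℕ} {v w : ℕ} (hv : v ∈ G.tableau p)
    (hw : w ∈ G.tableau q) (h : p.1 < q.1) : v < w := by
  obtain ⟨t, rfl, i, hi, hip, hti, -⟩ := G.exists_of_mem_tableau hv
  obtain ⟨u, rfl, j, hj, hjq, huj, -⟩ := G.exists_of_mem_tableau hw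
  have hij : i < j := by
    by_contra hji
    have := nzRow_le_nzRow (not_lt.mp hji) hi
    omega
  have := G.I_le_I (show i + 1 ≤ j from hij) hj.le
  simp only [Finset.mem_Ico] at hti huj
  omega

lemma le_of_mem_tableau_of_col_lt {p q : ℕ × ℕ} {v w : ℕ} (hv : v ∈ G.tableau p)
    (hw : w ∈ G.tableau q) (h1 : p.1 = q.1) (h2 : p.2 < q.2) : v ≤ w := by
  obtain ⟨t, rfl, i, hi, hip, hti, hct⟩ := G.exists_of_mem_tableau hv
  obtain ⟨u, rfl, j, hj, hjq, huj, hcu⟩ := G.exists_of_mem_tableau hw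
  obtain rfl : i = j := nzRow_inj hi hj (hip.trans (h1.trans hjq.symm))
  by_contra hlt
  have := G.lt_add_mark_of_mem_cols (Finset.mem_Ico.mp huj).1 (by omega : u < t) hcu hct
  have := mark_le_one k t
  omega

lemma le_row_add_one_of_mem_tableau {p : ℕ × ℕ} {v : ℕ} (hv : v ∈ G.tableau p) :
    v ≤ p.1 + 1 := by
  obtain ⟨t, rfl, j, hj, hjp, htj, -⟩ := G.exists_of_mem_tableau hv
  have := G.I_succ_le j hj
  rw [← hjp]
  simp only [Finset.mem_Ico] at htj
  omega

lemma isWeakCompTableau {f : ℕ × ℕ → ℕ} (hf : ∀ p ∈ boxes lam, f p ∈ G.tableau p) :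
    IsWeakCompTableau lam f where
  pos p hp := by
    obtain ⟨t, ht, -⟩ := G.exists_of_mem_tableau (hf p hp)
    omega
  mono p hp q hq hpq := by
    rcases hpq with h | ⟨h1, h2⟩
    · exact (G.lt_of_mem_tableau_of_row_lt (hf p hp) (hf q hq) h).le
    rcases h2.eq_or_lt with h2 | h2
    · rw [Prod.ext h1 h2]
    · exact G.le_of_mem_tableau_of_col_lt (hf p hp) (hf q hq) h1 h2
  rows p hp q hq h := G.lt_of_mem_tableau_of_row_lt (hf p hp) (hf q hq) h
  rowBound p hp := G.le_row_add_one_of_mem_tableau (hf p hp)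

lemma filter_mem_tableau_eq {j t : ℕ} (hj : j < numNz lam) (htj : t ∈ G.block j) :
    (boxes lam).filter (fun p => t + 1 ∈ G.tableau p) = {nzRow lam j} ×ˢ G.cols j t := by
  ext p
  simp only [Finset.mem_filter, G.mem_tableau, Finset.mem_product, Finset.mem_singleton]
  constructor
  · rintro ⟨-, i, hi, hip, hti, hc⟩
    obtain rfl := G.block_unique hi hj hti htj
    exact ⟨hip.symm, hc⟩
  · rintro ⟨hr, hc⟩
    refine ⟨mem_boxes.mpr ⟨hr ▸ (nzRow_mem hj).1, ?_⟩, j, hj, hr.symm, htj, hc⟩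
    rw [hr]
    exact Finset.mem_range.mp (G.cols_subset_range hj htj hc)

lemma card_filter_mem_tableau (t : ℕ) :
    ((boxes lam).filter fun p => t + 1 ∈ G.tableau p).card = entry k t := by
  by_cases ht : t < G.I (numNz lam)
  · obtain ⟨j, hj, htj⟩ := G.exists_block ht
    rw [G.filter_mem_tableau_eq hj htj, Finset.card_product, Finset.card_singleton, one_mul,
      G.card_cols hj htj]
  · rw [G.entry_eq_zero t (not_lt.mp ht), Finset.card_eq_zero, Finset.filter_eq_empty_iff]
    intro p _ hv
    obtain ⟨j, hj, -, htj, -⟩ := G.mem_tableau.mp hv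
    have := G.I_le_I (show j + 1 ≤ numNz lam from hj) le_rfl
    simp only [Finset.mem_Ico] at htj
    omega

lemma exists_lt_mem_tableau_of_mem_marks {t : ℕ} (htm : t ∈ k.marks) :
    ∃ p ∈ boxes lam, t + 1 ∈ G.tableau p ∧ ∃ v ∈ G.tableau p, v < t + 1 := by
  have ht : t < G.I (numNz lam) := by
    by_contra h
    exact G.valid t htm (G.entry_eq_zero t (not_lt.mp h))
  obtain ⟨j, hj, htj⟩ := G.exists_block ht
  have hfill := G.one_le_fill_of_mem_marks hj htj htm
  obtain ⟨h1, h2⟩ := Finset.mem_Ico.mp htj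
  -- the last box opened before `t + 1` is placed was opened by some earlier entry `s + 1`
  obtain ⟨s, hs1, hst, hs3, hs4⟩ := exists_le_lt_succ (G.fill j) h1 (c := G.fill j t - 1)
    (by rw [G.fill_start]; omega) (by omega)
  rw [G.fill_succ hs1] at hs4
  have : 1 ≤ entry k t := Nat.one_le_iff_ne_zero.mpr (G.valid t htm)
  have := mark_le_entry G.valid s
  have hct : G.fill j t - 1 ∈ G.cols j t := by
    simp only [cols, mark_eq_one htm, Finset.mem_Ico]
    omega
  have hcs : G.fill j t - 1 ∈ G.cols j s := by
    simp only [cols, Finset.mem_Ico]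
    omega
  refine ⟨(nzRow lam j, G.fill j t - 1), ?_, G.mem_tableau.mpr ⟨j, hj, rfl, htj, hct⟩,
    s + 1, G.mem_tableau.mpr ⟨j, hj, rfl, Finset.mem_Ico.mpr ⟨hs1, by omega⟩, hcs⟩, by omega⟩
  exact mem_boxes.mpr ⟨(nzRow_mem hj).1, Finset.mem_range.mp (G.cols_subset_range hj htj hct)⟩

lemma mem_marks_of_lt_mem_tableau {p : ℕ × ℕ} {t v : ℕ} (ht : t + 1 ∈ G.tableau p)
    (hv : v ∈ G.tableau p) (hvt : v < t + 1) : t ∈ k.marks := by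
  obtain ⟨j, hj, hjp, htj, hct⟩ := G.mem_tableau.mp ht
  obtain ⟨u, rfl, i, hi, hip, hui, hcu⟩ := G.exists_of_mem_tableau hv
  obtain rfl := nzRow_inj hi hj (hip.trans hjp.symm)
  have := G.lt_add_mark_of_mem_cols (Finset.mem_Ico.mp hui).1 (by omega) hcu hct
  by_contra htm
  rw [mark_eq_zero htm] at this
  omega

lemma mem_marks_iff (t : ℕ) :
    t ∈ k.marks ↔ ∃ p ∈ boxes lam, t + 1 ∈ G.tableau p ∧ ∃ v ∈ G.tableau p, v < t + 1 :=
  ⟨G.exists_lt_mem_tableau_of_mem_marks, fun ⟨_, _, ht, _, hv, hvt⟩ =>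
    G.mem_marks_of_lt_mem_tableau ht hv hvt⟩

end GlideData

lemma exists_tableau_of_glideData {lam : List ℕ} {k : WKomp} (G : GlideData k lam) :
    ∃ T, IsSetValuedWCT lam T ∧ HasKontent lam T k :=
  ⟨G.tableau, ⟨fun _ hp => G.tableau_nonempty hp, fun _ hf => G.isWeakCompTableau hf⟩,
    G.card_filter_mem_tableau, G.mem_marks_iff⟩

end Glide

theorem kontent_iff_glide (lam : List ℕ) (k : WKomp) (hk : k.Valid) :
    (∃ T : ℕ × ℕ → Finset ℕ, IsSetValuedWCT lam T ∧ HasKontent lam T k) ↔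
      IsGlide k lam := by
  refine ⟨fun ⟨T, hT, hK⟩ => Glide.glide_of_tableau hT hK, fun ⟨I, h0, hlt, hz, hblock⟩ => ?_⟩
  exact Glide.exists_tableau_of_glideData
    { I, valid := hk, I_zero := h0, I_lt_succ := hlt, entry_eq_zero := hz,
      sum_entry := fun j hj => (hblock j hj).1, I_succ_le := fun j hj => (hblock j hj).2.1,
      not_mem_marks := fun j hj => (hblock j hj).2.2 }
end

section
/- Let λ be a composition and n a positive integer. Then the sum of x^T over all composition tableaux T of shape λ with entries in {1,…,n} equals the sum of x^T over all weak composition tableaux T of shape (0^n, λ) with entries in {1,…,n}, where (0^n, λ) is the weak composition consisting of n zeros followed by the parts of λ. (That is, the fundamental quasisymmetric polynomial Q_λ(x_1,…,x_n) equals the slide polynomial F_{(0^n,λ)}(x_1,…,x_n).) -/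
/-!
STATEMENT 6: Let λ be a composition and n a positive integer. Then the sum of x^T over all
composition tableaux T of shape λ with entries in {1,…,n} equals the sum of x^T over all
weak composition tableaux T of shape (0^n, λ) with entries in {1,…,n}.
(That is, Q_λ(x_1,…,x_n) = F_{(0^n,λ)}(x_1,…,x_n).)

Conventions: the entry `e ∈ {1,…,n}` is represented by `e - 1 : Fin n`, and the variable
`x_e` is `MvPolynomial.X (e-1 : Fin n)`.
-/

open scoped Classical
open MvPolynomial

/-- A composition tableau of shape `lam` with entries in `{1,…,n}`, as a function from the
boxes to `Fin n` (`v : Fin n` represents the entry `v + 1`). -/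
def IsCompTabFn (lam : List ℕ) {n : ℕ} (T : {p // p ∈ boxes lam} → Fin n) : Prop :=
  (∀ p q : {p // p ∈ boxes lam}, boxLe p.1 q.1 → T p ≤ T q) ∧
  (∀ p q : {p // p ∈ boxes lam}, p.1.1 < q.1.1 → T p < T q)

/-- A weak composition tableau of shape `lam` with entries in `{1,…,n}`: a composition
tableau whose entries in (0-indexed) row `i` are all at most `i + 1`. -/
def IsWCTFn (lam : List ℕ) {n : ℕ} (T : {p // p ∈ boxes lam} → Fin n) : Prop :=
  IsCompTabFn lam T ∧ ∀ p : {p // p ∈ boxes lam}, (T p : ℕ) ≤ p.1.1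

lemma mem_boxes_iff (lam : List ℕ) (p : ℕ × ℕ) :
    p ∈ boxes lam ↔ p.1 < lam.length ∧ p.2 < lam.foldr max 0 ∧ p.2 < lam.getD p.1 0 := by
  simp [boxes, Finset.mem_filter, Finset.mem_product, and_assoc]

lemma foldr_max_pad (n : ℕ) (lam : List ℕ) :
    (List.replicate n 0 ++ lam).foldr max 0 = lam.foldr max 0 := by
  induction n with
  | zero => simp
  | succ k ih => simpa [List.replicate_succ] using ih

lemma getD_pad (n : ℕ) (lam : List ℕ) (i : ℕ) :
    (List.replicate n 0 ++ lam).getD (n + i) 0 = lam.getD i 0 := by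
  rw [List.getD_append_right _ _ _ _ (by simp)]
  simp

lemma getD_pad_lt (n : ℕ) (lam : List ℕ) (i : ℕ) (h : i < n) :
    (List.replicate n 0 ++ lam).getD i 0 = 0 := by
  rw [List.getD_append _ _ _ _ (by simpa using h)]
  simp [List.getD_eq_getElem?_getD, List.getElem?_replicate, h]

lemma fst_ge_of_mem_pad (n : ℕ) (lam : List ℕ) (q : ℕ × ℕ)
    (hq : q ∈ boxes (List.replicate n 0 ++ lam)) : n ≤ q.1 := by
  by_contra h
  push_neg at h
  have := (mem_boxes_iff _ q).mp hq
  rw [getD_pad_lt n lam q.1 h] at this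
  omega

/-- The boxes of `lam` correspond to the boxes of `0^n ++ lam` by shifting rows by `n`. -/
def boxEquiv (n : ℕ) (lam : List ℕ) :
    {p // p ∈ boxes lam} ≃ {p // p ∈ boxes (List.replicate n 0 ++ lam)} where
  toFun p := ⟨(n + p.1.1, p.1.2), by
    have h := (mem_boxes_iff lam p.1).mp p.2
    refine (mem_boxes_iff _ _).mpr ?_
    refine ⟨by simp; omega, ?_, ?_⟩
    · rw [foldr_max_pad]; exact h.2.1
    · rw [getD_pad]; exact h.2.2⟩
  invFun q := ⟨(q.1.1 - n, q.1.2), by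
    have h := (mem_boxes_iff _ q.1).mp q.2
    have hn : n ≤ q.1.1 := fst_ge_of_mem_pad n lam q.1 q.2
    refine (mem_boxes_iff _ _).mpr ?_
    have hq1 : q.1.1 = n + (q.1.1 - n) := by omega
    refine ⟨?_, ?_, ?_⟩
    · have := h.1; simp at this; omega
    · rw [foldr_max_pad] at h; exact h.2.1
    · have := h.2.2; rw [hq1, getD_pad] at this; exact this⟩
  left_inv p := by
    ext <;> simp
  right_inv q := by
    have hn : n ≤ q.1.1 := fst_ge_of_mem_pad n lam q.1 q.2
    ext <;> simp <;> omega

theorem quasisymmetric_eq_slide (n : ℕ) (hn : 0 < n) (lam : List ℕ)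
    (hpos : ∀ x ∈ lam, 0 < x) :
    (∑ T ∈ Finset.univ.filter
        (fun T : {p // p ∈ boxes lam} → Fin n => IsCompTabFn lam T),
      ∏ b : {p // p ∈ boxes lam}, (X (T b) : MvPolynomial (Fin n) ℤ))
    =
    (∑ T ∈ Finset.univ.filter
        (fun T : {p // p ∈ boxes (List.replicate n 0 ++ lam)} → Fin n =>
          IsWCTFn (List.replicate n 0 ++ lam) T),
      ∏ b : {p // p ∈ boxes (List.replicate n 0 ++ lam)},
        (X (T b) : MvPolynomial (Fin n) ℤ)) := by
  classical
  set pad := List.replicate n 0 ++ lam with hpad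
  set e := boxEquiv n lam with he
  have hfst : ∀ (p : {p // p ∈ boxes lam}), ((e p).1.1 : ℕ) = n + p.1.1 := fun p => rfl
  have hsnd : ∀ (p : {p // p ∈ boxes lam}), ((e p).1.2 : ℕ) = p.1.2 := fun p => rfl
  -- transfer of the tableau conditions
  have hcond : ∀ (T : {p // p ∈ boxes lam} → Fin n),
      IsCompTabFn lam T ↔ IsWCTFn pad (T ∘ e.symm) := by
    intro T
    constructor
    · rintro ⟨h1, h2⟩
      refine ⟨⟨?_, ?_⟩, ?_⟩
      · intro p q hle
        apply h1
        have hp := hfst (e.symm p); have hq := hfst (e.symm q)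
        simp only [Equiv.apply_symm_apply] at hp hq
        rcases hle with h | ⟨h, h'⟩
        · left; omega
        · right
          constructor
          · omega
          · have hp2 := hsnd (e.symm p); have hq2 := hsnd (e.symm q)
            simp only [Equiv.apply_symm_apply] at hp2 hq2
            omega
      · intro p q hlt
        apply h2
        have hp := hfst (e.symm p); have hq := hfst (e.symm q)
        simp only [Equiv.apply_symm_apply] at hp hq
        omega
      · intro p
        have := fst_ge_of_mem_pad n lam p.1 p.2
        have := (T (e.symm p)).2
        omega
    · rintro ⟨⟨h1, h2⟩, _⟩
      constructor
      · intro p q hle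
        have := h1 (e p) (e q) ?_
        · simpa using this
        · rcases hle with h | ⟨h, h'⟩
          · left; rw [hfst, hfst]; omega
          · right; constructor
            · rw [hfst, hfst]; omega
            · rw [hsnd, hsnd]; exact h'
      · intro p q hlt
        have := h2 (e p) (e q) (by rw [hfst, hfst]; omega)
        simpa using this
  refine Finset.sum_nbij' (i := fun T => T ∘ e.symm) (j := fun T => T ∘ e) ?_ ?_ ?_ ?_ ?_
  · intro T hT
    simp only [Finset.mem_filter, Finset.mem_univ, true_and] at hT ⊢
    exact (hcond T).mp hT
  · intro T hT
    simp only [Finset.mem_filter, Finset.mem_univ, true_and] at hT ⊢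
    refine (hcond (T ∘ e)).mpr ?_
    have : (T ∘ e) ∘ e.symm = T := by funext p; simp
    rw [this]; exact hT
  · intro T _; funext p; simp
  · intro T _; funext p; simp
  · intro T _
    rw [← Equiv.prod_comp e (fun b => (X ((T ∘ e.symm) b) : MvPolynomial (Fin n) ℤ))]
    simp
end
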